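/- For n >= 1 and a formal variable v, the symmetrization identity holds: sum over all permutations sigma in the symmetric group S_n of the product over pairs i < j of (x_{sigma(i)} - v x_{sigma(j)})/(x_{sigma(i)} - x_{sigma(j)}) equals the product over i from 1 to n of (1 - v^i)/(1 - v), as an identity of rational functions in x_1, ..., x_n over C(v). -/
import Mathlib

set_option synthInstance.maxHeartbeats 1000000
set_option maxHeartbeats 1000000

section Aux

set_option synthInstance.maxHeartbeats 1000000
set_option maxHeartbeats 1000000
open Finset Polynomial

variable {F ι : Type*} [Field F] [DecidableEq ι]

lemma coeff_basis_top {s : Finset ι} {v : ι → F} (hvs : Set.InjOn v s) {i : ι} (hi : i ∈ s) :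
    (Lagrange.basis s v i).coeff (#s - 1) = (∏ j ∈ s.erase i, (v i - v j))⁻¹ := by
  rw [← Lagrange.natDegree_basis hvs hi, ← Polynomial.leadingCoeff]
  unfold Lagrange.basis
  rw [Polynomial.leadingCoeff_prod, ← Finset.prod_inv_distrib]
  refine Finset.prod_congr rfl fun j hj => ?_
  have hne : v i ≠ v j := fun h => (Finset.mem_erase.mp hj).1 (hvs (Finset.mem_erase.mp hj).2 hi h.symm)
  unfold Lagrange.basisDivisor
  rw [leadingCoeff_mul, leadingCoeff_C, leadingCoeff_X_sub_C, mul_one]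

lemma coeff_interp [Fintype ι] {v : ι → F} (hv : Function.Injective v) {f : F[X]}
    (hf : f.degree < Fintype.card ι) :
    f.coeff (Fintype.card ι - 1) = ∑ i, f.eval (v i) * (∏ j ∈ univ.erase i, (v i - v j))⁻¹ := by
  have hcard : (#(univ : Finset ι)) = Fintype.card ι := Finset.card_univ
  have h := Lagrange.eq_interpolate (s := univ) hv.injOn (by rwa [hcard])
  conv_lhs => rw [h]
  rw [Lagrange.interpolate_apply, Polynomial.finset_sum_coeff]
  refine Finset.sum_congr rfl fun i _ => ?_
  rw [Polynomial.coeff_C_mul, ← hcard, coeff_basis_top hv.injOn (mem_univ i)]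

lemma prod_erase_zero' {M : Type*} [CommMonoid M] {n : ℕ} (g : Fin (n + 1) → M) :
    ∏ j ∈ univ.erase 0, g j = ∏ j : Fin n, g j.succ := by
  rw [← Fin.prod_Ioi_zero]
  congr 1
  ext j
  simp [Fin.pos_iff_ne_zero]

lemma prod_erase_succ' {M : Type*} [CommMonoid M] {n : ℕ} (g : Fin (n + 1) → M) (i : Fin n) :
    ∏ j ∈ univ.erase i.succ, g j = g 0 * ∏ j ∈ univ.erase i, g j.succ := by
  have h : (univ.erase i.succ : Finset (Fin (n+1))) = insert 0 ((univ.erase i).image Fin.succ) := by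
    ext j
    refine Fin.cases ?_ (fun l => ?_) j <;>
      simp [Fin.succ_ne_zero, (Fin.succ_ne_zero _).symm, Fin.succ_injective, eq_comm,
        Fin.succ_inj]
  rw [h, Finset.prod_insert (by simp [Fin.succ_ne_zero]),
    Finset.prod_image (fun a _ b _ h => Fin.succ_injective _ h)]

open Polynomial in
lemma keyA {F : Type*} [Field F] {m : ℕ} {x : Fin (m + 1) → F} (hx : Function.Injective x)
    (hx0 : ∀ i, x i ≠ 0) {v : F} (hv : v ≠ 1) :
    ∑ k, ∏ l ∈ univ.erase k, (x k - v * x l) / (x k - x l) = (1 - v ^ (m + 1)) / (1 - v) := by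
  set y : Fin (m + 2) → F := Fin.cons 0 x with hy
  have hyinj : Function.Injective y := by
    intro a b h
    induction a using Fin.cases with
    | zero =>
      induction b using Fin.cases with
      | zero => rfl
      | succ j => exact absurd h.symm (by simp [hy, hx0 j])
    | succ i =>
      induction b using Fin.cases with
      | zero => exact absurd h (by simp [hy, hx0 i])
      | succ j =>
        simp only [hy, Fin.cons_succ] at h
        rw [hx h]
  set Q : Polynomial F := ∏ l : Fin (m + 1), (X - C (v * x l)) with hQ
  have hQm : Q.Monic := monic_prod_of_monic _ _ fun _ _ => monic_X_sub_C _
  have hQd : Q.natDegree = m + 1 := by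
    rw [hQ, natDegree_prod_of_monic _ _ fun _ _ => monic_X_sub_C _]
    simp only [← C_mul, natDegree_X_sub_C, Finset.sum_const, Finset.card_univ,
      Fintype.card_fin, smul_eq_mul, mul_one]
  have hdeg : Q.degree < (Fintype.card (Fin (m + 2)) : ℕ) := by
    rw [degree_eq_natDegree hQm.ne_zero, hQd]
    simp only [Fintype.card_fin]
    exact_mod_cast Nat.lt_succ_self (m + 1)
  have h1 : Q.coeff (Fintype.card (Fin (m + 2)) - 1) = 1 := by
    rw [show Fintype.card (Fin (m + 2)) - 1 = m + 1 by simp, ← hQd]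
    exact hQm.coeff_natDegree
  rw [coeff_interp hyinj hdeg] at h1
  rw [Fin.sum_univ_succ] at h1
  have hterm0 : Q.eval (y 0) * (∏ j ∈ univ.erase (0 : Fin (m + 2)), (y 0 - y j))⁻¹ = v ^ (m + 1) := by
    rw [prod_erase_zero']
    simp only [hy, Fin.cons_zero, Fin.cons_succ]
    rw [hQ, eval_prod, ← Finset.prod_inv_distrib, ← Finset.prod_mul_distrib]
    simp only [eval_sub, eval_X, eval_C]
    rw [Finset.prod_congr rfl fun l _ => (by
      rw [zero_sub, zero_sub, inv_neg, neg_mul_neg, mul_assoc, mul_inv_cancel₀ (hx0 l), mul_one] :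
        (0 - v * x l) * (0 - x l)⁻¹ = v), Finset.prod_const]
    simp
  rw [hterm0] at h1
  have htermS : ∀ i : Fin (m + 1),
      Q.eval (y i.succ) * (∏ j ∈ univ.erase i.succ, (y i.succ - y j))⁻¹ =
      (1 - v) * ∏ l ∈ univ.erase i, (x i - v * x l) / (x i - x l) := by
    intro i
    rw [prod_erase_succ']
    simp only [hy, Fin.cons_zero, Fin.cons_succ]
    rw [hQ, eval_prod]
    simp only [eval_sub, eval_X, eval_C]
    rw [← Finset.mul_prod_erase univ _ (mem_univ i)]
    rw [Finset.prod_div_distrib]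
    have hB : ∏ j ∈ univ.erase i, (x i - x j) ≠ 0 :=
      Finset.prod_ne_zero_iff.mpr fun j hj => sub_ne_zero_of_ne fun h => (mem_erase.mp hj).1 (hx h.symm)
    field_simp [hx0 i]
    ring
  rw [Finset.sum_congr rfl fun i _ => htermS i, ← Finset.mul_sum] at h1
  have h1v : (1 : F) - v ≠ 0 := sub_ne_zero_of_ne (Ne.symm hv)
  set S := ∑ k, ∏ l ∈ univ.erase k, (x k - v * x l) / (x k - x l) with hS
  field_simp
  linear_combination h1

lemma keyS {F : Type*} [Field F] (n : ℕ) (x : Fin n → F) (hx : Function.Injective x)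
    (hx0 : ∀ i, x i ≠ 0) {v : F} (hv : v ≠ 1) :
    ∑ σ : Equiv.Perm (Fin n), ∏ i : Fin n, ∏ j ∈ Finset.Ioi i,
        (x (σ i) - v * x (σ j)) / (x (σ i) - x (σ j)) =
      ∏ i ∈ Finset.range n, (1 - v ^ (i + 1)) / (1 - v) := by
  induction n with
  | zero => simp
  | succ m ih =>
    have hgi : ∀ k : Fin (m + 1), Function.Injective (fun j : Fin m => Equiv.swap 0 k j.succ) :=
      fun k => (Equiv.injective _).comp (Fin.succ_injective m)
    have himg : ∀ k : Fin (m + 1),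
        (univ : Finset (Fin m)).image (fun j => Equiv.swap 0 k j.succ) = univ.erase k := by
      intro k
      apply Finset.eq_of_subset_of_card_le
      · intro a ha
        simp only [Finset.mem_image] at ha
        obtain ⟨j, -, rfl⟩ := ha
        refine Finset.mem_erase.mpr ⟨fun h => ?_, Finset.mem_univ _⟩
        exact Fin.succ_ne_zero j
          ((Equiv.swap 0 k).injective (h.trans (Equiv.swap_apply_left 0 k).symm))
      · rw [Finset.card_erase_of_mem (mem_univ k), Finset.card_image_of_injective _ (hgi k)]
        simp
    rw [← Equiv.sum_comp (Equiv.Perm.decomposeFin).symm, Fintype.sum_prod_type]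
    have hsummand : ∀ (k : Fin (m + 1)) (e : Equiv.Perm (Fin m)),
        (∏ i : Fin (m + 1), ∏ j ∈ Ioi i,
          (x (Equiv.Perm.decomposeFin.symm (k, e) i) -
              v * x (Equiv.Perm.decomposeFin.symm (k, e) j)) /
            (x (Equiv.Perm.decomposeFin.symm (k, e) i) -
              x (Equiv.Perm.decomposeFin.symm (k, e) j))) =
        (∏ l ∈ univ.erase k, (x k - v * x l) / (x k - x l)) *
          ∏ i : Fin m, ∏ j ∈ Ioi i,
            (x (Equiv.swap 0 k (e i).succ) - v * x (Equiv.swap 0 k (e j).succ)) /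
            (x (Equiv.swap 0 k (e i).succ) - x (Equiv.swap 0 k (e j).succ)) := by
      intro k e
      rw [Fin.prod_univ_succ]
      congr 1
      · rw [Fin.prod_Ioi_zero]
        simp only [Equiv.Perm.decomposeFin_symm_apply_zero,
          Equiv.Perm.decomposeFin_symm_apply_succ]
        rw [show (∏ j : Fin m, (x k - v * x (Equiv.swap 0 k (e j).succ)) /
              (x k - x (Equiv.swap 0 k (e j).succ))) =
            ∏ j : Fin m, (x k - v * x (Equiv.swap 0 k j.succ)) /
              (x k - x (Equiv.swap 0 k j.succ)) from Equiv.prod_comp e fun j => (x k - v * x (Equiv.swap 0 k j.succ)) /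
              (x k - x (Equiv.swap 0 k j.succ))]
        rw [← himg k, Finset.prod_image fun a _ b _ h => hgi k h]
      · simp only [Fin.prod_Ioi_succ, Equiv.Perm.decomposeFin_symm_apply_succ]
    have hinner : ∀ k : Fin (m + 1),
        ∑ e : Equiv.Perm (Fin m), (∏ i : Fin m, ∏ j ∈ Ioi i,
          (x (Equiv.swap 0 k (e i).succ) - v * x (Equiv.swap 0 k (e j).succ)) /
          (x (Equiv.swap 0 k (e i).succ) - x (Equiv.swap 0 k (e j).succ))) =
        ∏ i ∈ Finset.range m, (1 - v ^ (i + 1)) / (1 - v) :=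
      fun k => ih (fun j => x (Equiv.swap 0 k j.succ)) (hx.comp (hgi k)) (fun j => hx0 _)
    rw [Finset.sum_congr rfl fun k _ => by
      rw [Finset.sum_congr rfl fun e _ => hsummand k e, ← Finset.mul_sum, hinner k]]
    rw [← Finset.sum_mul, keyA hx hx0 hv, Finset.prod_range_succ]
    ring

end Aux



open MvPolynomial Equiv

/-- The field ℂ(v) of rational functions. -/
noncomputable abbrev Kv : Type := RatFunc ℂ

/-- The field of rational functions in `x_1, …, x_n` over ℂ(v). -/
noncomputable abbrev FF (n : ℕ) : Type := FractionRing (MvPolynomial (Fin n) Kv)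

/-- The variable `x_i` inside the rational function field. -/
noncomputable def xv {n : ℕ} (i : Fin n) : FF n :=
  algebraMap (MvPolynomial (Fin n) Kv) (FF n) (X i)

/-- The parameter `v` inside the rational function field. -/
noncomputable def vF (n : ℕ) : FF n :=
  algebraMap (MvPolynomial (Fin n) Kv) (FF n) (C RatFunc.X)

/-- for `n ≥ 1`,
`∑_{σ ∈ S_n} ∏_{i<j} (x_{σ(i)} - v x_{σ(j)})/(x_{σ(i)} - x_{σ(j)}) = ∏_{i=1}^{n} (1-v^i)/(1-v)`
as rational functions in `x_1, …, x_n` over ℂ(v). -/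
theorem stmt8 (n : ℕ) (hn : 1 ≤ n) :
    ∑ σ : Perm (Fin n),
      ∏ p ∈ Finset.univ.filter (fun p : Fin n × Fin n => p.1 < p.2),
        (xv (σ p.1) - vF n * xv (σ p.2)) / (xv (σ p.1) - xv (σ p.2)) =
    ∏ i ∈ Finset.range n, (1 - vF n ^ (i + 1)) / (1 - vF n) := by
  have hpairs : ∀ f : Fin n → Fin n → FF n,
      ∏ p ∈ Finset.univ.filter (fun p : Fin n × Fin n => p.1 < p.2), f p.1 p.2 =
        ∏ i : Fin n, ∏ j ∈ Finset.Ioi i, f i j := by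
    intro f
    rw [Finset.prod_filter, Fintype.prod_prod_type]
    exact Finset.prod_congr rfl fun i _ => by
      rw [← Finset.prod_filter, Finset.filter_lt_eq_Ioi]
  have halg : Function.Injective (algebraMap (MvPolynomial (Fin n) Kv) (FF n)) :=
    IsFractionRing.injective _ _
  have hxinj : Function.Injective (xv (n := n)) := fun i j h => X_injective (halg h)
  have hx0 : ∀ i : Fin n, xv i ≠ 0 := fun i h =>
    X_ne_zero i (halg (h.trans (map_zero _).symm))
  have hv : vF n ≠ 1 := by
    intro h
    have h2 : (MvPolynomial.C RatFunc.X : MvPolynomial (Fin n) Kv) = MvPolynomial.C 1 := by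
      rw [map_one]
      exact halg (h.trans (map_one _).symm)
    have h3 : (RatFunc.X : RatFunc ℂ) = 1 := C_injective _ _ h2
    have h4 : (Polynomial.X : Polynomial ℂ) = 1 :=
      RatFunc.algebraMap_injective ℂ (by rw [RatFunc.algebraMap_X, map_one, h3])
    simpa [Polynomial.coeff_one] using congrArg (Polynomial.coeff · 1) h4
  rw [Finset.sum_congr rfl fun σ _ =>
    hpairs fun a b => (xv (σ a) - vF n * xv (σ b)) / (xv (σ a) - xv (σ b))]
  exact keyS n xv hxinj hx0 hv
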